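/- arXiv:1812.00450 — 7 statements merged into one kernel-verified Lean document; each statement's English description precedes it below -/
import Mathlib

section
/- For every finite system A and every entropy function H, there exists a unique information function I on the nonempty subsets of A satisfying the defining linear system: for every nonempty B ⊆ A, ∑_{nonempty S ⊆ A with S ∩ B ≠ ∅} I(S) = H(B). (That is, the 2^|A| − 1 linear equations in the 2^|A| − 1 unknowns I(S) have exactly one solution.) -/
/-!
Writing `G C = ∑_{S ⊆ C} I S`, a set `S ⊆ A` meets `B` exactly when `S ⊄ A \ B`, so the equation
for `B` reads `G A - G (A \ B) = H B`. Once `I ∅ = 0`, the system is therefore equivalent to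
`G C = H A - H (A \ C)` for all `C ⊆ A`, with `H ∅` read as `0` (the system never evaluates `H ∅`).
Möbius inversion on the subset lattice then recovers `I` from `G`, uniquely.
-/

open Finset

variable {U : Type*}

/-- `I` solves the defining linear system of the information function of the system `A`
(with entropy function `H`): for every nonempty `B ⊆ A`, the sum of `I S` over all
nonempty `S ⊆ A` with `S ∩ B ≠ ∅` equals `H B`. -/
def IsInfoFn [DecidableEq U] (H : Finset U → ℝ) (A : Finset U) (I : Finset U → ℝ) : Prop :=
  ∀ B : Finset U, B ⊆ A → B.Nonempty →
    ∑ S ∈ A.powerset.filter (fun S => S.Nonempty ∧ (S ∩ B).Nonempty), I S = H B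

/-- The complexity of the system `A` at scale `k` (with information function `I`):
the sum of `I S` over all nonempty `S ⊆ A` with `|S| ≥ k`. -/
def complexityAt (A : Finset U) (I : Finset U → ℝ) (k : ℕ) : ℝ :=
  ∑ S ∈ A.powerset.filter (fun S => S.Nonempty ∧ k ≤ S.card), I S

/-- Conditional information `I(f(S)|S)` of a dependency `S` of `A`, relative to the primed
system `A'` with priming map `f`, computed with the information function `IJ` of the joint
system `A ∪ A'`: the sum of `IJ T` over all nonempty `T ⊆ A ∪ A'` with `T ∩ A' = f(S)`
and `T ∩ A ≠ S`. -/
def condInfo [DecidableEq U] (A A' : Finset U) (f : U → U) (IJ : Finset U → ℝ)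
    (S : Finset U) : ℝ :=
  ∑ T ∈ (A ∪ A').powerset.filter
      (fun T => T.Nonempty ∧ T ∩ A' = S.image f ∧ T ∩ A ≠ S), IJ T

/-- The noise complexity `C_{A'|A}(k)`: the sum of the conditional informations
`I(f(S)|S)` over all nonempty `S ⊆ A` with `|S| ≥ k`. -/
def noiseComplexityAt [DecidableEq U] (A A' : Finset U) (f : U → U) (IJ : Finset U → ℝ)
    (k : ℕ) : ℝ :=
  ∑ S ∈ A.powerset.filter (fun S => S.Nonempty ∧ k ≤ S.card), condInfo A A' f IJ S

section MoebiusInversion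

open IncidenceAlgebra

variable {𝕜 α : Type*} [Ring 𝕜] [PartialOrder α] [OrderBot α] [LocallyFiniteOrder α]
  [DecidableEq α]

theorem sum_Iic_sum_Iic_mu_mul (g : α → 𝕜) (x : α) :
    ∑ z ∈ Iic x, ∑ y ∈ Iic z, mu 𝕜 y z * g y = g x := by
  rw [sum_comm' (t' := Iic x) (s' := fun y => Icc y x)]
  · simp_rw [← sum_mul, sum_Icc_mu_right, ite_mul, one_mul, zero_mul]
    exact sum_ite_eq_of_mem' _ _ _ (mem_Iic.2 le_rfl)
  · intro z y
    simp only [mem_Iic, mem_Icc]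
    exact ⟨fun ⟨hzx, hyz⟩ => ⟨⟨hyz, hzx⟩, hyz.trans hzx⟩, fun ⟨⟨hyz, hzx⟩, _⟩ => ⟨hzx, hyz⟩⟩

theorem eq_of_forall_le_sum_Iic_eq {f f' : α → 𝕜} {x : α}
    (h : ∀ y ≤ x, ∑ z ∈ Iic y, f z = ∑ z ∈ Iic y, f' z) : f x = f' x := by
  rw [moebius_inversion_bot f _ (fun _ => rfl), moebius_inversion_bot f' _ (fun _ => rfl)]
  exact sum_congr rfl fun y hy => by rw [h y (mem_Iic.1 hy)]

end MoebiusInversion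

section InfoFunction

variable [DecidableEq U] {H : Finset U → ℝ} {A : Finset U} {I : Finset U → ℝ}

theorem filter_inter_nonempty_eq_powerset_sdiff (A B : Finset U) :
    A.powerset.filter (fun S => S.Nonempty ∧ (S ∩ B).Nonempty)
      = A.powerset \ (A \ B).powerset := by
  ext S
  simp only [mem_filter, mem_sdiff, mem_powerset, subset_sdiff, not_and,
    not_disjoint_iff_nonempty_inter]
  exact ⟨fun ⟨hSA, _, hSB⟩ => ⟨hSA, fun _ => hSB⟩,
    fun ⟨hSA, hSB⟩ => ⟨hSA, (hSB hSA).mono inter_subset_left, hSB hSA⟩⟩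

theorem isInfoFn_iff_sum_powerset_sub :
    IsInfoFn H A I ↔ ∀ B ⊆ A,
      ∑ S ∈ A.powerset, I S - ∑ S ∈ (A \ B).powerset, I S = Function.update H ∅ 0 B := by
  simp only [IsInfoFn, filter_inter_nonempty_eq_powerset_sdiff,
    sum_sdiff_eq_sub (powerset_mono.2 sdiff_subset)]
  refine ⟨fun h B hB => ?_, fun h B hB hBne => ?_⟩
  · rcases B.eq_empty_or_nonempty with rfl | hBne
    · simp
    · rw [h B hB hBne, Function.update_of_ne hBne.ne_empty]
  · rw [h B hB, Function.update_of_ne hBne.ne_empty]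

theorem isInfoFn_iff_sum_powerset (hI : I ∅ = 0) :
    IsInfoFn H A I ↔ ∀ C ⊆ A,
      ∑ S ∈ C.powerset, I S = Function.update H ∅ 0 A - Function.update H ∅ 0 (A \ C) := by
  rw [isInfoFn_iff_sum_powerset_sub]
  refine ⟨fun h C hC => ?_, fun h B hB => ?_⟩
  · have hA := h A subset_rfl
    rw [sdiff_self, bot_eq_empty, powerset_empty, sum_singleton, hI, sub_zero] at hA
    rw [← h (A \ C) sdiff_subset, Finset.sdiff_sdiff_eq_self hC, hA, sub_sub_cancel]
  · rw [h A subset_rfl, h (A \ B) sdiff_subset, Finset.sdiff_sdiff_eq_self hB, sdiff_self,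
      bot_eq_empty, Function.update_self, sub_zero, sub_sub_cancel]

noncomputable def infoFn (H : Finset U → ℝ) (A S : Finset U) : ℝ :=
  if S ⊆ A then
    ∑ T ∈ S.powerset, IncidenceAlgebra.mu ℝ T S
      * (Function.update H ∅ 0 A - Function.update H ∅ 0 (A \ T))
  else 0

theorem infoFn_eq_zero {S : Finset U} (hS : ¬(S.Nonempty ∧ S ⊆ A)) : infoFn H A S = 0 := by
  by_cases hSA : S ⊆ A
  · obtain rfl : S = ∅ := not_nonempty_iff_eq_empty.1 fun hne => hS ⟨hne, hSA⟩
    simp [infoFn]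
  · rw [infoFn, if_neg hSA]

theorem sum_powerset_infoFn {C : Finset U} (hC : C ⊆ A) :
    ∑ S ∈ C.powerset, infoFn H A S
      = Function.update H ∅ 0 A - Function.update H ∅ 0 (A \ C) := by
  rw [← sum_Iic_sum_Iic_mu_mul (fun T => Function.update H ∅ 0 A - Function.update H ∅ 0 (A \ T))
    C, Iic_eq_powerset]
  refine sum_congr rfl fun S hS => ?_
  rw [infoFn, if_pos ((mem_powerset.1 hS).trans hC), Iic_eq_powerset]

theorem isInfoFn_infoFn : IsInfoFn H A (infoFn H A) :=
  (isInfoFn_iff_sum_powerset (infoFn_eq_zero (by simp))).2 fun _ => sum_powerset_infoFn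

end InfoFunction

theorem info_function_existsUnique_general [DecidableEq U]
    (H : Finset U → ℝ) (A : Finset U) :
    ∃! I : Finset U → ℝ,
      (∀ S : Finset U, ¬(S.Nonempty ∧ S ⊆ A) → I S = 0) ∧ IsInfoFn H A I := by
  refine ⟨infoFn H A, ⟨fun S => infoFn_eq_zero, isInfoFn_infoFn⟩, ?_⟩
  rintro I ⟨hI0, hI⟩
  have hsum := (isInfoFn_iff_sum_powerset (hI0 ∅ (by simp))).1 hI
  funext S
  by_cases hSA : S ⊆ A
  · refine eq_of_forall_le_sum_Iic_eq fun T hTS => ?_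
    rw [Iic_eq_powerset, hsum T (hTS.trans hSA), sum_powerset_infoFn (hTS.trans hSA)]
  · rw [hI0 S fun h => hSA h.2, infoFn_eq_zero fun h => hSA h.2]

/-- For every finite system `A` and every entropy function `H`, there is a
unique information function `I` on the nonempty subsets of `A` (represented as a function
on all finsets that vanishes off the nonempty subsets of `A`) satisfying the defining
linear system: for every nonempty `B ⊆ A`,
`∑_{nonempty S ⊆ A, S ∩ B ≠ ∅} I S = H B`. -/
theorem info_function_existsUnique [Fintype U] [DecidableEq U]
    (H : Finset U → ℝ) (A : Finset U) :
    ∃! I : Finset U → ℝ,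
      (∀ S : Finset U, ¬(S.Nonempty ∧ S ⊆ A) → I S = 0) ∧ IsInfoFn H A I :=
  info_function_existsUnique_general H A
end

section
/- Let A ⊆ C be two systems in the universe U. Then for every nonempty S ⊆ A, the information assigned to the irreducible dependency S by the smaller system equals the total information of all irreducible dependencies of the larger system that restrict to it: I_A(S) = ∑_{nonempty T ⊆ C with T ∩ A = S} I_C(T). -/
open Finset

variable {U : Type*}

lemma sum_nonempty_subsets [DecidableEq U] (H : Finset U → ℝ) (A : Finset U)
    (I : Finset U → ℝ) (hI : IsInfoFn H A I) (hA : A.Nonempty)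
    (D : Finset U) (hD : D ⊆ A) :
    ∑ S ∈ A.powerset.filter (fun S => S.Nonempty ∧ S ⊆ D), I S
      = if D = A then H A else H A - H (A \ D) := by
  have htot : ∑ S ∈ A.powerset.filter (fun S => S.Nonempty), I S = H A := by
    rw [← hI A subset_rfl hA]
    apply sum_congr _ fun _ _ => rfl
    apply filter_congr
    intro S hS
    simp only [mem_powerset] at hS
    simp [inter_eq_left.mpr hS]
  by_cases hDA : D = A
  · subst hDA
    rw [if_pos rfl, ← htot]
    apply sum_congr _ fun _ _ => rfl
    apply filter_congr
    intro S hS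
    simp only [mem_powerset] at hS
    simp [hS]
  · rw [if_neg hDA]
    have hB : (A \ D).Nonempty := by
      rw [sdiff_nonempty]; exact fun h => hDA (subset_antisymm hD h)
    have hHB := hI (A \ D) sdiff_subset hB
    have hsplit := sum_filter_add_sum_filter_not (A.powerset.filter (fun S => S.Nonempty))
      (fun S => (S ∩ (A \ D)).Nonempty) I
    rw [filter_filter, filter_filter] at hsplit
    have h2 : A.powerset.filter (fun S => S.Nonempty ∧ ¬(S ∩ (A \ D)).Nonempty)
        = A.powerset.filter (fun S => S.Nonempty ∧ S ⊆ D) := by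
      apply filter_congr
      intro S hS
      simp only [mem_powerset] at hS
      simp only [not_nonempty_iff_eq_empty, and_congr_right_iff]
      intro _
      constructor
      · intro h x hx
        have hxA := hS hx
        by_contra hxD
        exact absurd h (Finset.nonempty_iff_ne_empty.mp ⟨x, mem_inter.mpr ⟨hx, mem_sdiff.mpr ⟨hxA, hxD⟩⟩⟩)
      · intro h
        rw [← Finset.not_nonempty_iff_eq_empty]
        rintro ⟨x, hx⟩
        simp only [mem_inter, mem_sdiff] at hx
        exact hx.2.2 (h hx.1)
    rw [h2, hHB, htot] at hsplit
    linarith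

lemma info_unique [DecidableEq U] (H : Finset U → ℝ) (A : Finset U)
    (I1 I2 : Finset U → ℝ) (h1 : IsInfoFn H A I1) (h2 : IsInfoFn H A I2)
    (hA : A.Nonempty) :
    ∀ S : Finset U, S ⊆ A → S.Nonempty → I1 S = I2 S := by
  intro S
  induction S using Finset.strongInduction with
  | _ S ih =>
    intro hSA hS
    have key1 := sum_nonempty_subsets H A I1 h1 hA S hSA
    have key2 := sum_nonempty_subsets H A I2 h2 hA S hSA
    have hmem : S ∈ A.powerset.filter (fun T => T.Nonempty ∧ T ⊆ S) := by
      simp [hSA, hS]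
    have e1 := Finset.add_sum_erase _ I1 hmem
    have e2 := Finset.add_sum_erase _ I2 hmem
    have hsum : ∑ T ∈ (A.powerset.filter (fun T => T.Nonempty ∧ T ⊆ S)).erase S, I1 T
        = ∑ T ∈ (A.powerset.filter (fun T => T.Nonempty ∧ T ⊆ S)).erase S, I2 T := by
      apply sum_congr rfl
      intro T hT
      simp only [mem_erase, mem_filter, mem_powerset] at hT
      exact ih T (Finset.ssubset_iff_subset_ne.mpr ⟨hT.2.2.2, hT.1⟩) hT.2.1 hT.2.2.1
    rw [key2] at e2
    rw [key1] at e1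
    rw [hsum] at e1
    linarith

/-- For systems `A ⊆ C` and every nonempty `S ⊆ A`, the information
assigned to the irreducible dependency `S` by the smaller system equals the total
information of all irreducible dependencies of the larger system that restrict to it:
`I_A(S) = ∑_{nonempty T ⊆ C, T ∩ A = S} I_C(T)`. -/
theorem info_eq_sum_refinements [Fintype U] [DecidableEq U]
    (H : Finset U → ℝ) (A C : Finset U) (hAC : A ⊆ C)
    (IA IC : Finset U → ℝ)
    (hIA : IsInfoFn H A IA) (hIC : IsInfoFn H C IC)
    (S : Finset U) (hSA : S ⊆ A) (hSne : S.Nonempty) :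
    IA S = ∑ T ∈ C.powerset.filter (fun T => T.Nonempty ∧ T ∩ A = S), IC T := by
  set J : Finset U → ℝ := fun S => ∑ T ∈ C.powerset.filter (fun T => T.Nonempty ∧ T ∩ A = S), IC T
    with hJdef
  have hJ : IsInfoFn H A J := by
    intro B hBA hB
    rw [← hIC B (hBA.trans hAC) hB]
    have hmaps : ∀ T ∈ C.powerset.filter (fun T => T.Nonempty ∧ (T ∩ B).Nonempty),
        T ∩ A ∈ A.powerset.filter (fun S => S.Nonempty ∧ (S ∩ B).Nonempty) := by
      intro T hT
      simp only [mem_filter, mem_powerset] at hT ⊢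
      refine ⟨inter_subset_right, hT.2.2.mono (inter_subset_inter_left hBA), ?_⟩
      have : T ∩ A ∩ B = T ∩ B := by
        rw [inter_assoc, inter_eq_right.mpr hBA]
      rw [this]; exact hT.2.2
    rw [← Finset.sum_fiberwise_of_maps_to hmaps IC]
    apply sum_congr rfl
    intro S hS
    simp only [mem_filter, mem_powerset] at hS
    rw [hJdef]
    apply sum_congr _ fun _ _ => rfl
    rw [filter_filter]
    apply filter_congr
    intro T hT
    simp only [mem_powerset] at hT
    constructor
    · rintro ⟨hTne, hTA⟩
      refine ⟨⟨hTne, ?_⟩, hTA⟩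
      have : T ∩ B = S ∩ B := by
        rw [← hTA, inter_assoc, inter_eq_right.mpr hBA]
      rw [this]; exact hS.2.2
    · rintro ⟨⟨hTne, _⟩, hTA⟩
      exact ⟨hTne, hTA⟩
  exact info_unique H A IA J hIA hJ (hSne.mono hSA) S hSA hSne
end

section
/- (Well-definedness of I, Lemma A.1.) Let A and B be two systems in the universe U with A ∩ B ≠ ∅, and let a dependency be given by disjoint finsets P (included parts, nonempty) and Q (excluded parts) with P ∪ Q ⊆ A ∩ B, so that it is a dependency of both systems. Then the information in this dependency is independent of the system in which it is computed: ∑_{S with P ⊆ S ⊆ A \ Q} I_A(S) = ∑_{S with P ⊆ S ⊆ B \ Q} I_B(S); that is, I_A(P|Q) = I_B(P|Q). -/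
open Finset

variable {U : Type*}

private lemma alt0 [DecidableEq U] (R : Finset U) :
    ∑ T ∈ R.powerset, (-1 : ℝ) ^ (R \ T).card = if R = ∅ then 1 else 0 := by
  have h1 : ∑ T ∈ R.powerset, (-1 : ℝ) ^ (R \ T).card
      = ∑ T ∈ R.powerset, (-1 : ℝ) ^ T.card := by
    refine Finset.sum_nbij' (fun T => R \ T) (fun T => R \ T) ?_ ?_ ?_ ?_ ?_
    · intro a _; simp [sdiff_subset]
    · intro a _; simp [sdiff_subset]
    · intro a ha; simp only [mem_powerset] at ha; exact Finset.sdiff_sdiff_eq_self ha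
    · intro a ha; simp only [mem_powerset] at ha; exact Finset.sdiff_sdiff_eq_self ha
    · intro a _; rfl
  have h2 := Finset.sum_powerset_neg_one_pow_card (x := R)
  rw [h1, show ∑ T ∈ R.powerset, (-1 : ℝ) ^ T.card
      = ((∑ T ∈ R.powerset, (-1 : ℤ) ^ T.card : ℤ) : ℝ) by push_cast; rfl, h2]
  split <;> simp

private lemma alt [DecidableEq U] (P X : Finset U) (hX : X ⊆ P) :
    ∑ T ∈ P.powerset.filter (fun T => X ⊆ T), (-1 : ℝ) ^ (P \ T).card
      = if X = P then 1 else 0 := by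
  have h1 : ∑ T ∈ P.powerset.filter (fun T => X ⊆ T), (-1 : ℝ) ^ (P \ T).card
      = ∑ T ∈ (P \ X).powerset, (-1 : ℝ) ^ ((P \ X) \ T).card := by
    refine Finset.sum_nbij' (fun T => T \ X) (fun T => T ∪ X) ?_ ?_ ?_ ?_ ?_
    · intro a ha; simp only [mem_filter, mem_powerset] at ha
      simp only [mem_powerset]
      exact sdiff_subset_sdiff ha.1 le_rfl
    · intro a ha; simp only [mem_powerset] at ha
      simp only [mem_filter, mem_powerset]
      exact ⟨union_subset (ha.trans sdiff_subset) hX, subset_union_right⟩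
    · intro a ha; simp only [mem_filter, mem_powerset] at ha
      exact sdiff_union_of_subset ha.2
    · intro a ha; simp only [mem_powerset] at ha
      show (a ∪ X) \ X = a
      ext x
      simp only [mem_sdiff, mem_union]
      constructor
      · rintro ⟨hx | hx, hxX⟩
        · exact hx
        · exact absurd hx hxX
      · intro hx
        exact ⟨Or.inl hx, fun hxX => (mem_sdiff.mp (ha hx)).2 hxX⟩
    · intro a ha; simp only [mem_filter, mem_powerset] at ha
      show (-1 : ℝ) ^ (P \ a).card = (-1 : ℝ) ^ ((P \ X) \ (a \ X)).card
      have : P \ a = (P \ X) \ (a \ X) := by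
        ext x
        simp only [mem_sdiff]
        constructor
        · rintro ⟨hxP, hxa⟩
          exact ⟨⟨hxP, fun hxX => hxa (ha.2 hxX)⟩, fun hc => hxa hc.1⟩
        · rintro ⟨⟨hxP, hxX⟩, hc⟩
          exact ⟨hxP, fun hxa => hc ⟨hxa, hxX⟩⟩
      rw [this]
  rw [h1, alt0]
  by_cases h : X = P
  · simp [h]
  · rw [if_neg (fun he => h (subset_antisymm hX (sdiff_eq_empty_iff_subset.mp he))),
      if_neg h]

private lemma key [DecidableEq U] (H : Finset U → ℝ) (A : Finset U) (I : Finset U → ℝ)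
    (hI : IsInfoFn H A I) (P Q : Finset U) (hP : P.Nonempty) (hPQ : Disjoint P Q)
    (hsub : P ∪ Q ⊆ A) :
    ∑ S ∈ A.powerset.filter (fun S => S.Nonempty ∧ P ⊆ S ∧ S ⊆ A \ Q), I S
      = ∑ T ∈ P.powerset, (-1 : ℝ) ^ ((P \ T).card + 1) *
          (if (Q ∪ (P \ T)).Nonempty then H (Q ∪ (P \ T)) else 0) := by
  have hPA : P ⊆ A := (subset_union_left).trans hsub
  have hQA : Q ⊆ A := (subset_union_right).trans hsub
  have hPAQ : P ⊆ A \ Q := subset_sdiff.mpr ⟨hPA, hPQ⟩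
  set C : Finset U → Finset U := fun T => ((A \ Q) \ P) ∪ T with hC
  have hAC : ∀ T ⊆ P, A \ C T = Q ∪ (P \ T) := by
    intro T hT
    ext x
    have h1 : x ∈ P → x ∈ A := @hPA x
    have h2 : x ∈ Q → x ∈ A := @hQA x
    have h3 : x ∈ T → x ∈ P := @hT x
    have h4 : x ∈ P → x ∉ Q := fun hp hq => (Finset.disjoint_left.mp hPQ hp hq)
    simp only [hC, mem_sdiff, mem_union]
    tauto
  have hsubC : ∀ T ⊆ P, ∀ S ⊆ A, (S ⊆ C T ↔ S ⊆ A \ Q ∧ S ∩ P ⊆ T) := by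
    intro T hT S hS
    constructor
    · intro h
      constructor
      · intro x hx
        rcases mem_union.mp (h hx) with hx' | hx'
        · exact (mem_sdiff.mp hx').1
        · exact hPAQ (hT hx')
      · intro x hx
        rcases mem_inter.mp hx with ⟨hxS, hxP⟩
        rcases mem_union.mp (h hxS) with hx' | hx'
        · exact absurd hxP (mem_sdiff.mp hx').2
        · exact hx'
    · rintro ⟨hq1, hq2⟩ x hx
      by_cases hxP : x ∈ P
      · exact mem_union_right _ (hq2 (mem_inter.mpr ⟨hx, hxP⟩))
      · exact mem_union_left _ (mem_sdiff.mpr ⟨hq1 hx, hxP⟩)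
  set Tot : ℝ := ∑ S ∈ A.powerset.filter (fun S => S.Nonempty), I S with hTot
  have hsplit : ∀ T ∈ P.powerset,
      ∑ S ∈ A.powerset.filter (fun S => S.Nonempty ∧ S ⊆ C T), I S
        = Tot - (if (Q ∪ (P \ T)).Nonempty then H (Q ∪ (P \ T)) else 0) := by
    intro T hT
    rw [mem_powerset] at hT
    have hpart := Finset.sum_filter_add_sum_filter_not
        (A.powerset.filter (fun S => S.Nonempty)) (fun S => S ⊆ C T) I
    have e1 : (A.powerset.filter (fun S => S.Nonempty)).filter (fun S => S ⊆ C T)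
        = A.powerset.filter (fun S => S.Nonempty ∧ S ⊆ C T) := by
      rw [filter_filter]
    have e2 : (A.powerset.filter (fun S => S.Nonempty)).filter (fun S => ¬ S ⊆ C T)
        = A.powerset.filter (fun S => S.Nonempty ∧ (S ∩ (Q ∪ (P \ T))).Nonempty) := by
      rw [filter_filter]
      apply filter_congr
      intro S hS
      rw [mem_powerset] at hS
      have hiff : ¬ S ⊆ C T ↔ (S ∩ (Q ∪ (P \ T))).Nonempty := by
        rw [← hAC T hT]
        constructor
        · intro h
          obtain ⟨x, hx, hx'⟩ := Finset.not_subset.mp h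
          exact ⟨x, mem_inter.mpr ⟨hx, mem_sdiff.mpr ⟨hS hx, hx'⟩⟩⟩
        · rintro ⟨x, hx⟩
          rcases mem_inter.mp hx with ⟨hq1, hq2⟩
          exact Finset.not_subset.mpr ⟨x, hq1, (mem_sdiff.mp hq2).2⟩
      rw [hiff]
    have e3 : ∑ S ∈ A.powerset.filter
          (fun S => S.Nonempty ∧ (S ∩ (Q ∪ (P \ T))).Nonempty), I S
        = if (Q ∪ (P \ T)).Nonempty then H (Q ∪ (P \ T)) else 0 := by
      by_cases hne : (Q ∪ (P \ T)).Nonempty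
      · rw [if_pos hne]
        exact hI _ (union_subset hQA ((sdiff_subset).trans hPA)) hne
      · rw [if_neg hne, Finset.sum_eq_zero]
        intro S hS
        rw [mem_filter] at hS
        rw [Finset.not_nonempty_iff_eq_empty.mp hne] at hS
        simp at hS
    rw [e1, e2, e3] at hpart
    linarith
  have swap : ∑ S ∈ A.powerset.filter (fun S => S.Nonempty ∧ P ⊆ S ∧ S ⊆ A \ Q), I S
      = ∑ T ∈ P.powerset, (-1 : ℝ) ^ (P \ T).card *
          ∑ S ∈ A.powerset.filter (fun S => S.Nonempty ∧ S ⊆ C T), I S := by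
    have rhs : ∀ T ∈ P.powerset,
        (-1 : ℝ) ^ (P \ T).card *
            ∑ S ∈ A.powerset.filter (fun S => S.Nonempty ∧ S ⊆ C T), I S
        = ∑ S ∈ A.powerset,
            if S.Nonempty ∧ S ⊆ C T then (-1 : ℝ) ^ (P \ T).card * I S else 0 := by
      intro T _
      rw [Finset.sum_filter, Finset.mul_sum]
      refine Finset.sum_congr rfl fun S _ => ?_
      split <;> simp
    rw [Finset.sum_congr rfl rhs, Finset.sum_comm, Finset.sum_filter]
    refine Finset.sum_congr rfl fun S hS => ?_
    rw [mem_powerset] at hS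
    by_cases hSne : S.Nonempty
    case neg => simp [hSne]
    by_cases hSAQ : S ⊆ A \ Q
    · have hcond : ∀ T ∈ P.powerset, (S.Nonempty ∧ S ⊆ C T) ↔ (S ∩ P ⊆ T) := by
        intro T hT
        rw [mem_powerset] at hT
        rw [hsubC T hT S hS]
        simp [hSne, hSAQ]
      symm
      calc ∑ T ∈ P.powerset,
            (if S.Nonempty ∧ S ⊆ C T then (-1 : ℝ) ^ (P \ T).card * I S else 0)
          = ∑ T ∈ P.powerset,
            (if S ∩ P ⊆ T then (-1 : ℝ) ^ (P \ T).card * I S else 0) := by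
            refine Finset.sum_congr rfl fun T hT => ?_
            rw [if_congr (hcond T hT) rfl rfl]
        _ = (∑ T ∈ P.powerset.filter (fun T => S ∩ P ⊆ T),
              (-1 : ℝ) ^ (P \ T).card) * I S := by
            rw [← Finset.sum_filter, Finset.sum_mul]
        _ = (if S ∩ P = P then 1 else 0) * I S := by
            rw [alt P (S ∩ P) inter_subset_right]
        _ = if S.Nonempty ∧ P ⊆ S ∧ S ⊆ A \ Q then I S else 0 := by
            by_cases hPS : P ⊆ S
            · rw [if_pos (inter_eq_right.mpr hPS), if_pos ⟨hSne, hPS, hSAQ⟩, one_mul]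
            · rw [if_neg (fun h => hPS (by rw [← h]; exact inter_subset_left)),
                if_neg (by tauto), zero_mul]
    · have hno : ∀ T ∈ P.powerset, ¬ (S.Nonempty ∧ S ⊆ C T) := by
        intro T hT h
        rw [mem_powerset] at hT
        exact hSAQ ((hsubC T hT S hS).mp h.2).1
      rw [Finset.sum_eq_zero (fun T hT => if_neg (hno T hT)), if_neg (by tauto)]
  have halt : ∑ T ∈ P.powerset, (-1 : ℝ) ^ (P \ T).card = 0 := by
    have h := alt P ∅ (empty_subset P)
    rw [filter_true_of_mem (fun _ _ => empty_subset _)] at h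
    rw [h, if_neg (fun h' => hP.ne_empty h'.symm)]
  rw [swap, Finset.sum_congr rfl (fun T hT => by rw [hsplit T hT, mul_sub])]
  rw [Finset.sum_sub_distrib, ← Finset.sum_mul, halt, zero_mul, zero_sub,
    ← Finset.sum_neg_distrib]
  refine Finset.sum_congr rfl fun T _ => ?_
  ring

/-- Well-definedness of `I`, Lemma A.1. Let `A` and `B` be systems with
`A ∩ B ≠ ∅`, and let a dependency be given by disjoint finsets `P` (included, nonempty) and
`Q` (excluded) with `P ∪ Q ⊆ A ∩ B`, so that it is a dependency of both systems.  Then the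
information in this dependency is independent of the system in which it is computed:
`∑_{nonempty S, P ⊆ S ⊆ A \ Q} I_A(S) = ∑_{nonempty S, P ⊆ S ⊆ B \ Q} I_B(S)`,
i.e. `I_A(P|Q) = I_B(P|Q)`. -/
theorem info_dependency_welldefined [Fintype U] [DecidableEq U]
    (H : Finset U → ℝ) (A B : Finset U) (hAB : (A ∩ B).Nonempty)
    (IA IB : Finset U → ℝ)
    (hIA : IsInfoFn H A IA) (hIB : IsInfoFn H B IB)
    (P Q : Finset U) (hP : P.Nonempty) (hPQ : Disjoint P Q) (hsub : P ∪ Q ⊆ A ∩ B) :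
    ∑ S ∈ A.powerset.filter (fun S => S.Nonempty ∧ P ⊆ S ∧ S ⊆ A \ Q), IA S =
      ∑ S ∈ B.powerset.filter (fun S => S.Nonempty ∧ P ⊆ S ∧ S ⊆ B \ Q), IB S := by
  rw [key H A IA hIA P Q hP hPQ (hsub.trans inter_subset_left),
    key H B IB hIB P Q hP hPQ (hsub.trans inter_subset_right)]
end

section
/- For every system A in the universe U, the sum over all scales of the complexity of A equals the sum of the individual entropies of its parts: ∑_{k=1}^{|A|} C_A(k) = ∑_{a ∈ A} H({a}). (Equivalently, ∑_{nonempty S ⊆ A} |S| · I_A(S) = ∑_{a ∈ A} H({a}); this is the information-theoretic form of the conservation law ∑_k C(k) = N·v: any reorganization that increases complexity at one scale must decrease it at others.) -/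
open Finset

variable {U : Type*}

/-- For every system `A`, the sum over all scales of the complexity of `A`
equals the sum of the individual entropies of its parts:
`∑_{k=1}^{|A|} C_A(k) = ∑_{a ∈ A} H({a})`; equivalently,
`∑_{nonempty S ⊆ A} |S| · I_A(S) = ∑_{a ∈ A} H({a})`. -/
theorem sum_complexity_eq_sum_part_entropies [Fintype U] [DecidableEq U]
    (H : Finset U → ℝ) (A : Finset U) (IA : Finset U → ℝ) (hIA : IsInfoFn H A IA) :
    (∑ k ∈ Finset.Icc 1 A.card, complexityAt A IA k = ∑ a ∈ A, H {a}) ∧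
    (∑ S ∈ A.powerset.filter (fun S => S.Nonempty), (S.card : ℝ) * IA S
      = ∑ a ∈ A, H {a}) := by
  have h2 : ∑ S ∈ A.powerset.filter (fun S => S.Nonempty), (S.card : ℝ) * IA S
      = ∑ a ∈ A, H {a} := by
    have hH : ∀ a ∈ A, H {a}
        = ∑ S ∈ A.powerset.filter (fun S => S.Nonempty), (if a ∈ S then IA S else 0) := by
      intro a ha
      rw [← hIA {a} (by simpa using ha) ⟨a, mem_singleton_self a⟩]
      rw [Finset.sum_filter, Finset.sum_filter]
      apply Finset.sum_congr rfl
      intro S _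
      by_cases hS : S.Nonempty <;> by_cases haS : a ∈ S <;>
        simp [hS, haS, Finset.Nonempty, Finset.mem_inter]
    rw [Finset.sum_congr rfl hH, Finset.sum_comm]
    apply Finset.sum_congr rfl
    intro S hS
    simp only [Finset.mem_filter, Finset.mem_powerset] at hS
    rw [Finset.sum_ite_mem]
    have : A ∩ S = S := Finset.inter_eq_right.2 hS.1
    rw [this, Finset.sum_const, nsmul_eq_mul]
  constructor
  · rw [← h2]
    have : ∀ k ∈ Finset.Icc 1 A.card, complexityAt A IA k
        = ∑ S ∈ A.powerset.filter (fun S => S.Nonempty), (if k ≤ S.card then IA S else 0) := by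
      intro k _
      rw [complexityAt, Finset.sum_filter, Finset.sum_filter]
      apply Finset.sum_congr rfl
      intro S _
      by_cases hS : S.Nonempty <;> by_cases hk : k ≤ S.card <;> simp [hS, hk]
    rw [Finset.sum_congr rfl this, Finset.sum_comm]
    apply Finset.sum_congr rfl
    intro S hS
    simp only [Finset.mem_filter, Finset.mem_powerset] at hS
    have hcard : S.card ≤ A.card := Finset.card_le_card hS.1
    have : ∀ k, k ∈ Finset.Icc 1 A.card ∧ k ≤ S.card ↔ k ∈ Finset.Icc 1 S.card := by
      intro k
      simp only [Finset.mem_Icc]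
      omega
    rw [← Finset.sum_filter]
    have hf : (Finset.Icc 1 A.card).filter (fun k => k ≤ S.card) = Finset.Icc 1 S.card := by
      ext k
      simp only [Finset.mem_filter]
      exact this k
    rw [hf, Finset.sum_const, Nat.card_Icc, nsmul_eq_mul]
    simp
  · exact h2
end

section
/- (Lemma: independence kills cross-dependencies.) Let A and B be disjoint systems in the universe U that are informationally independent, i.e. H(A ∪ B) = H(A) + H(B), and assume the information function of the joint system is nonnegative: I_{A∪B}(T) ≥ 0 for all nonempty T ⊆ A ∪ B. Then every irreducible dependency of A ∪ B whose included parts meet both systems carries no information: if T ⊆ A ∪ B with T ∩ A ≠ ∅ and T ∩ B ≠ ∅, then I_{A∪B}(T) = 0. -/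
open Finset

variable {U : Type*}

/-- independence kills cross-dependencies. If `A` and `B` are disjoint,
informationally independent systems (`H(A ∪ B) = H A + H B`) and the information function
of the joint system is nonnegative, then every irreducible dependency of `A ∪ B` whose
included parts meet both systems carries no information. -/
theorem cross_dependency_info_eq_zero [Fintype U] [DecidableEq U]
    (H : Finset U → ℝ) (A B : Finset U) (hdisj : Disjoint A B)
    (hindep : H (A ∪ B) = H A + H B)
    (IJ : Finset U → ℝ) (hIJ : IsInfoFn H (A ∪ B) IJ)
    (hnn : ∀ T : Finset U, T ⊆ A ∪ B → T.Nonempty → 0 ≤ IJ T)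
    (T : Finset U) (hT : T ⊆ A ∪ B)
    (hTA : (T ∩ A).Nonempty) (hTB : (T ∩ B).Nonempty) :
    IJ T = 0 := by
    classical
  obtain ⟨a, ha⟩ := hTA
  obtain ⟨b, hb⟩ := hTB
  have hAne : A.Nonempty := ⟨a, (mem_inter.mp ha).2⟩
  have hBne : B.Nonempty := ⟨b, (mem_inter.mp hb).2⟩
  have hTne : T.Nonempty := ⟨a, (mem_inter.mp ha).1⟩
  have hA := hIJ A subset_union_left hAne
  have hB := hIJ B subset_union_right hBne
  have hAB := hIJ (A ∪ B) (le_refl _) (hAne.mono subset_union_left)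
  set P := (A ∪ B).powerset
  -- total sum over nonempty subsets
  have htot : ∑ S ∈ P.filter (fun S => S.Nonempty), IJ S = H (A ∪ B) := by
    rw [← hAB]
    apply Finset.sum_congr _ (fun _ _ => rfl)
    apply Finset.filter_congr
    intro S hS
    simp only [P, mem_powerset] at hS
    constructor
    · intro h
      exact ⟨h, by rwa [Finset.inter_eq_left.mpr hS]⟩
    · intro h; exact h.1
  -- split total by meeting A
  have split1 : ∑ S ∈ P.filter (fun S => S.Nonempty), IJ S
      = ∑ S ∈ P.filter (fun S => S.Nonempty ∧ (S ∩ A).Nonempty), IJ S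
      + ∑ S ∈ P.filter (fun S => S.Nonempty ∧ ¬(S ∩ A).Nonempty), IJ S := by
    rw [← Finset.sum_filter_add_sum_filter_not (P.filter fun S => S.Nonempty)
      (fun S => (S ∩ A).Nonempty) IJ, Finset.filter_filter, Finset.filter_filter]
  -- split meets-B by meeting A
  have split2 : ∑ S ∈ P.filter (fun S => S.Nonempty ∧ (S ∩ B).Nonempty), IJ S
      = ∑ S ∈ P.filter (fun S => (S.Nonempty ∧ (S ∩ B).Nonempty) ∧ (S ∩ A).Nonempty), IJ S
      + ∑ S ∈ P.filter (fun S => (S.Nonempty ∧ (S ∩ B).Nonempty) ∧ ¬(S ∩ A).Nonempty), IJ S := by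
    rw [← Finset.sum_filter_add_sum_filter_not
      (P.filter fun S => S.Nonempty ∧ (S ∩ B).Nonempty)
      (fun S => (S ∩ A).Nonempty) IJ, Finset.filter_filter, Finset.filter_filter]
  -- nonempty, not meeting A ⇒ meets B
  have hmiss : P.filter (fun S => S.Nonempty ∧ ¬(S ∩ A).Nonempty)
      = P.filter (fun S => (S.Nonempty ∧ (S ∩ B).Nonempty) ∧ ¬(S ∩ A).Nonempty) := by
    apply Finset.filter_congr
    intro S hS
    simp only [mem_powerset, P] at hS
    constructor
    · rintro ⟨hSne, hnA⟩
      refine ⟨⟨hSne, ?_⟩, hnA⟩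
      obtain ⟨x, hx⟩ := hSne
      rcases mem_union.mp (hS hx) with h | h
      · exact absurd ⟨x, mem_inter.mpr ⟨hx, h⟩⟩ hnA
      · exact ⟨x, mem_inter.mpr ⟨hx, h⟩⟩
    · rintro ⟨⟨hSne, _⟩, hnA⟩; exact ⟨hSne, hnA⟩
  have key : ∑ S ∈ P.filter (fun S => (S.Nonempty ∧ (S ∩ B).Nonempty) ∧ (S ∩ A).Nonempty), IJ S = 0 := by
    have := htot
    rw [split1, hmiss, hindep, ← hA, ← hB, split2] at this
    linarith
  have hmem : T ∈ P.filter (fun S => (S.Nonempty ∧ (S ∩ B).Nonempty) ∧ (S ∩ A).Nonempty) := by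
    simp only [mem_filter, mem_powerset, P]
    exact ⟨hT, ⟨hTne, ⟨b, hb⟩⟩, ⟨a, ha⟩⟩
  refine (Finset.sum_eq_zero_iff_of_nonneg ?_).mp key T hmem
  intro S hS
  simp only [mem_filter, mem_powerset, P] at hS
  exact hnn S hS.1 hS.2.1.1
end

section
/- (Pointwise step of Theorem 'entirely new system'.) Let A be a system and B a disjoint system in the universe U with a bijection f : A → B, suppose A and B are informationally independent (H(A ∪ B) = H(A) + H(B)) and I_{A∪B} is nonnegative. Then for every nonempty S ⊆ A, the conditional information of the new dependency given the old one equals its unconditional information: I(f(S)|S) = I_B(f(S)). -/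
open Finset

variable {U : Type*}

private lemma sum_D_eq_zero [DecidableEq U] (H : Finset U → ℝ) (B : Finset U)
    (I I' : Finset U → ℝ) (hI : IsInfoFn H B I) (hI' : IsInfoFn H B I') :
    ∀ X ⊆ B, ∑ S ∈ X.powerset.filter (fun S => S.Nonempty), (I S - I' S) = 0 := by
  have hGB : ∑ S ∈ B.powerset.filter (fun S => S.Nonempty), (I S - I' S) = 0 := by
    rcases B.eq_empty_or_nonempty with rfl | hBne
    · simp [Finset.filter_singleton]
    · have h1 := hI B Subset.rfl hBne
      have h2 := hI' B Subset.rfl hBne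
      have hfe : B.powerset.filter (fun S => S.Nonempty ∧ (S ∩ B).Nonempty)
          = B.powerset.filter (fun S => S.Nonempty) := by
        apply filter_congr
        intro S hS
        rw [mem_powerset] at hS
        simp [inter_eq_left.mpr hS]
      rw [hfe] at h1 h2
      rw [Finset.sum_sub_distrib, h1, h2, sub_self]
  intro X hX
  by_cases hXB : X = B
  · exact hXB ▸ hGB
  · have hCne : (B \ X).Nonempty := by
      rw [sdiff_nonempty]; exact fun h => hXB (Subset.antisymm hX h)
    have h1 := hI (B \ X) sdiff_subset hCne
    have h2 := hI' (B \ X) sdiff_subset hCne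
    have hS1 : ∑ S ∈ B.powerset.filter (fun S => S.Nonempty ∧ (S ∩ (B \ X)).Nonempty),
        (I S - I' S) = 0 := by
      rw [Finset.sum_sub_distrib, h1, h2, sub_self]
    have hsplit := Finset.sum_filter_add_sum_filter_not
      (B.powerset.filter (fun S => S.Nonempty)) (fun S => (S ∩ (B \ X)).Nonempty)
      (fun S => I S - I' S)
    have he1 : (B.powerset.filter (fun S => S.Nonempty)).filter
        (fun S => (S ∩ (B \ X)).Nonempty)
        = B.powerset.filter (fun S => S.Nonempty ∧ (S ∩ (B \ X)).Nonempty) := by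
      rw [filter_filter]
    have he2 : (B.powerset.filter (fun S => S.Nonempty)).filter
        (fun S => ¬(S ∩ (B \ X)).Nonempty)
        = X.powerset.filter (fun S => S.Nonempty) := by
      ext S
      simp only [mem_filter, mem_powerset, not_nonempty_iff_eq_empty]
      constructor
      · rintro ⟨⟨hSB, hSne⟩, hd⟩
        refine ⟨fun a ha => ?_, hSne⟩
        by_contra haX
        exact absurd hd (fun h => (eq_empty_iff_forall_notMem.mp h a)
          (mem_inter.mpr ⟨ha, mem_sdiff.mpr ⟨hSB ha, haX⟩⟩))
      · rintro ⟨hSX, hSne⟩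
        refine ⟨⟨hSX.trans hX, hSne⟩, ?_⟩
        rw [eq_empty_iff_forall_notMem]
        intro a ha
        rw [mem_inter, mem_sdiff] at ha
        exact ha.2.2 (hSX ha.1)
    rw [he1, he2, hS1, zero_add] at hsplit
    rw [hsplit, hGB]

private lemma infoFn_unique [DecidableEq U] (H : Finset U → ℝ) (B : Finset U)
    (I I' : Finset U → ℝ) (hI : IsInfoFn H B I) (hI' : IsInfoFn H B I') :
    ∀ S ⊆ B, S.Nonempty → I S = I' S := by
  have key := sum_D_eq_zero H B I I' hI hI'
  intro S
  induction S using Finset.strongInduction with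
  | _ S ih =>
    intro hSB hSne
    have hG := key S hSB
    have hmem : S ∈ S.powerset.filter (fun T => T.Nonempty) :=
      mem_filter.mpr ⟨mem_powerset.mpr Subset.rfl, hSne⟩
    rw [← Finset.add_sum_erase _ _ hmem] at hG
    have hrest : ∑ T ∈ (S.powerset.filter (fun T => T.Nonempty)).erase S,
        (I T - I' T) = 0 := by
      apply Finset.sum_eq_zero
      intro T hT
      rw [mem_erase, mem_filter, mem_powerset] at hT
      obtain ⟨hTS, hTsub, hTne⟩ := hT
      have := ih T (ssubset_of_subset_of_ne hTsub hTS) (hTsub.trans hSB) hTne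
      linarith
    rw [hrest, add_zero] at hG
    linarith

/-- pointwise step of the 'entirely new system' theorem. If `B` is a
disjoint system unrelated to `A` (`H(A ∪ B) = H A + H B`), with priming bijection
`f : A → B`, the joint information function is nonnegative, and `I_B` is the information
function of `B`, then for every nonempty `S ⊆ A` the conditional information of the new
dependency given the old one equals its unconditional information:
`I(f(S)|S) = I_B(f(S))`. -/
theorem condInfo_of_new_system [Fintype U] [DecidableEq U]
    (H : Finset U → ℝ) (A B : Finset U) (hdisj : Disjoint A B)
    (f : U → U) (hf : Set.BijOn f ↑A ↑B)
    (hindep : H (A ∪ B) = H A + H B)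
    (IJ : Finset U → ℝ) (hIJ : IsInfoFn H (A ∪ B) IJ)
    (hnn : ∀ T : Finset U, T ⊆ A ∪ B → T.Nonempty → 0 ≤ IJ T)
    (IB : Finset U → ℝ) (hIB : IsInfoFn H B IB)
    (S : Finset U) (hSA : S ⊆ A) (hSne : S.Nonempty) :
    condInfo A B f IJ S = IB (S.image f) := by
  classical
  obtain ⟨a0, ha0⟩ := hSne
  have hAne : A.Nonempty := ⟨a0, hSA ha0⟩
  have hfS_sub : S.image f ⊆ B := by
    intro x hx
    rw [mem_image] at hx
    obtain ⟨a, ha, rfl⟩ := hx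
    exact hf.mapsTo (hSA ha)
  have hSne : S.Nonempty := ⟨a0, ha0⟩
  have hfSne : (S.image f).Nonempty := hSne.image f
  obtain ⟨b0, hb0⟩ := hfSne
  have hBne : B.Nonempty := ⟨b0, hfS_sub hb0⟩
  have hfSne : (S.image f).Nonempty := hSne.image f
  -- cross terms vanish
  have hcross : ∀ T, T ⊆ A ∪ B → (T ∩ A).Nonempty → (T ∩ B).Nonempty → IJ T = 0 := by
    have eqAB := hIJ (A ∪ B) Subset.rfl ⟨a0, mem_union_left _ (hSA ha0)⟩
    have eqA := hIJ A subset_union_left hAne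
    have eqB := hIJ B subset_union_right hBne
    have hfe : (A ∪ B).powerset.filter (fun T => T.Nonempty ∧ (T ∩ (A ∪ B)).Nonempty)
        = (A ∪ B).powerset.filter (fun T => T.Nonempty) := by
      apply filter_congr
      intro T hT
      rw [mem_powerset] at hT
      simp [inter_eq_left.mpr hT]
    rw [hfe] at eqAB
    -- split total sum by whether T ∩ A is nonempty
    have hsplit1 := Finset.sum_filter_add_sum_filter_not
      ((A ∪ B).powerset.filter (fun T => T.Nonempty)) (fun T => (T ∩ A).Nonempty) IJ
    rw [filter_filter, filter_filter] at hsplit1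
    -- split the B-sum by whether T ∩ A is nonempty
    have hsplit2 := Finset.sum_filter_add_sum_filter_not
      ((A ∪ B).powerset.filter (fun T => T.Nonempty ∧ (T ∩ B).Nonempty))
      (fun T => (T ∩ A).Nonempty) IJ
    rw [filter_filter, filter_filter] at hsplit2
    have hB0 : (A ∪ B).powerset.filter
        (fun T => (T.Nonempty ∧ (T ∩ B).Nonempty) ∧ ¬(T ∩ A).Nonempty)
        = (A ∪ B).powerset.filter (fun T => T.Nonempty ∧ ¬(T ∩ A).Nonempty) := by
      ext T
      simp only [mem_filter, mem_powerset, not_nonempty_iff_eq_empty]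
      constructor
      · rintro ⟨hTsub, ⟨hTne, _⟩, hTA⟩
        exact ⟨hTsub, hTne, hTA⟩
      · rintro ⟨hTsub, hTne, hTA⟩
        have hTB : T ⊆ B := by
          intro a ha
          rcases mem_union.mp (hTsub ha) with h | h
          · exact absurd (mem_inter.mpr ⟨ha, h⟩)
              (eq_empty_iff_forall_notMem.mp hTA a)
          · exact h
        exact ⟨hTsub, ⟨hTne, by rwa [inter_eq_left.mpr hTB]⟩, hTA⟩
    rw [hB0] at hsplit2
    have hX0 : ∑ T ∈ (A ∪ B).powerset.filter
        (fun T => (T.Nonempty ∧ (T ∩ B).Nonempty) ∧ (T ∩ A).Nonempty), IJ T = 0 := by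
      have : ∑ T ∈ (A ∪ B).powerset.filter
          (fun T => T.Nonempty ∧ (T ∩ A).Nonempty), IJ T = H A := eqA
      nlinarith [hsplit1, hsplit2, eqAB, eqA, eqB, hindep]
    intro T hTsub hTA hTB
    have hTmem : T ∈ (A ∪ B).powerset.filter
        (fun T => (T.Nonempty ∧ (T ∩ B).Nonempty) ∧ (T ∩ A).Nonempty) := by
      rw [mem_filter, mem_powerset]
      obtain ⟨a, ha⟩ := hTA
      exact ⟨hTsub, ⟨⟨a, (mem_inter.mp ha).1⟩, hTB⟩, ⟨a, ha⟩⟩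
    have hnn' : ∀ T' ∈ (A ∪ B).powerset.filter
        (fun T => (T.Nonempty ∧ (T ∩ B).Nonempty) ∧ (T ∩ A).Nonempty), 0 ≤ IJ T' := by
      intro T' hT'
      rw [mem_filter, mem_powerset] at hT'
      exact hnn T' hT'.1 hT'.2.1.1
    exact (Finset.sum_eq_zero_iff_of_nonneg hnn').mp hX0 T hTmem
  -- condInfo reduces to the single term T = S.image f
  have hstep2 : condInfo A B f IJ S = IJ (S.image f) := by
    unfold condInfo
    apply Finset.sum_eq_single_of_mem
    · rw [mem_filter, mem_powerset]
      have hdA : S.image f ∩ A = ∅ := by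
        rw [← Finset.disjoint_iff_inter_eq_empty]
        exact (hdisj.symm.mono_left hfS_sub)
      refine ⟨hfS_sub.trans subset_union_right, hfSne, inter_eq_left.mpr hfS_sub, ?_⟩
      rw [hdA]
      exact fun h => hSne.ne_empty h.symm
    · intro T hT hTne
      rw [mem_filter, mem_powerset] at hT
      obtain ⟨hTsub, hTne', hTB, hTA⟩ := hT
      apply hcross T hTsub ?_ (hTB ▸ hfSne)
      rw [nonempty_iff_ne_empty]
      intro hTA0
      apply hTne
      have hTsubB : T ⊆ B := by
        intro a ha
        rcases mem_union.mp (hTsub ha) with h | h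
        · exact absurd (mem_inter.mpr ⟨ha, h⟩) (eq_empty_iff_forall_notMem.mp hTA0 a)
        · exact h
      rw [← hTB, inter_eq_left.mpr hTsubB]
  -- IJ restricted to B is an info function for B
  have hIJB : IsInfoFn H B IJ := by
    intro C hCB hCne
    have h1 := hIJ C (hCB.trans subset_union_right) hCne
    rw [← h1]
    apply Finset.sum_subset
    · exact filter_subset_filter _ (powerset_mono.mpr subset_union_right)
    · intro T hT hT'
      rw [mem_filter, mem_powerset] at hT hT'
      obtain ⟨hTsub, hTne, hTC⟩ := hT
      obtain ⟨c, hc⟩ := hTC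
      rw [mem_inter] at hc
      have hTnotB : ¬ T ⊆ B := fun h => hT' ⟨h, hTne, ⟨c, mem_inter.mpr hc⟩⟩
      obtain ⟨a, ha, haB⟩ := not_subset.mp hTnotB
      have haA : a ∈ A := (mem_union.mp (hTsub ha)).resolve_right haB
      exact hcross T hTsub ⟨a, mem_inter.mpr ⟨ha, haA⟩⟩
        ⟨c, mem_inter.mpr ⟨hc.1, hCB hc.2⟩⟩
  rw [hstep2]
  exact infoFn_unique H B IJ IB hIJB hIB (S.image f) hfS_sub hfSne
end

section
/- (Theorem: the change carries the newly arising complexity.) Let A and A' be disjoint systems in the universe U with priming bijection f : A → A', and assume I_{A∪A'} is nonnegative. If the unaltered system has no complexity at scale κ, i.e. C_A(κ) = 0, then the noise complexity at scale κ equals the complexity of the altered system at that scale: C_{A'|A}(κ) = C_{A'}(κ). -/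
open Finset

variable {U : Type*}

section Aux
variable [DecidableEq U]

/-- Sum of `g` over nonempty subsets of `C`. -/
private def Gsum (g : Finset U → ℝ) (C : Finset U) : ℝ :=
  ∑ S ∈ C.powerset.filter (fun S => S.Nonempty), g S

private lemma Gsum_empty (g : Finset U → ℝ) : Gsum g (∅ : Finset U) = 0 := by
  simp [Gsum, Finset.filter_singleton]

private lemma sum_split (A B : Finset U) (hB : B ⊆ A) (g : Finset U → ℝ) :
    ∑ S ∈ A.powerset.filter (fun S => S.Nonempty ∧ (S ∩ B).Nonempty), g S
      = Gsum g A - Gsum g (A \ B) := by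
  have h := Finset.sum_filter_add_sum_filter_not (A.powerset.filter (fun S => S.Nonempty))
    (fun S => (S ∩ B).Nonempty) g
  rw [Finset.filter_filter] at h
  have h2 : (A.powerset.filter (fun S => S.Nonempty)).filter
      (fun S => ¬(S ∩ B).Nonempty) = (A \ B).powerset.filter (fun S => S.Nonempty) := by
    ext S
    simp only [Finset.mem_filter, Finset.mem_powerset, Finset.not_nonempty_iff_eq_empty,
      Finset.subset_sdiff, ← Finset.disjoint_iff_inter_eq_empty]
    tauto
  rw [h2] at h
  unfold Gsum
  linarith

private lemma Gsum_zero (A : Finset U) (g : Finset U → ℝ)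
    (hg : ∀ B ⊆ A, B.Nonempty →
      ∑ S ∈ A.powerset.filter (fun S => S.Nonempty ∧ (S ∩ B).Nonempty), g S = 0) :
    ∀ C ⊆ A, Gsum g C = 0 := by
  have hGA : Gsum g A = 0 := by
    rcases A.eq_empty_or_nonempty with rfl | hA
    · exact Gsum_empty g
    · have := hg A subset_rfl hA
      rw [sum_split A A subset_rfl g, Finset.sdiff_self, Gsum_empty] at this
      linarith
  intro C hCA
  by_cases hC : C = A
  · rw [hC]; exact hGA
  · have hBne : (A \ C).Nonempty := by
      rw [Finset.sdiff_nonempty]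
      intro h
      exact hC (Finset.Subset.antisymm hCA h)
    have := hg (A \ C) (Finset.sdiff_subset) hBne
    rw [sum_split A (A \ C) Finset.sdiff_subset g] at this
    have hAC : A \ (A \ C) = C := by
      rw [Finset.sdiff_sdiff_eq_self hCA]
    rw [hAC] at this
    linarith

private lemma vanish (A : Finset U) (g : Finset U → ℝ)
    (hg : ∀ B ⊆ A, B.Nonempty →
      ∑ S ∈ A.powerset.filter (fun S => S.Nonempty ∧ (S ∩ B).Nonempty), g S = 0) :
    ∀ S ⊆ A, S.Nonempty → g S = 0 := by
  intro S
  induction S using Finset.strongInduction with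
  | _ S ih =>
    intro hSA hS
    have hG : Gsum g S = 0 := Gsum_zero A g hg S hSA
    have hsingle : Gsum g S = g S := by
      unfold Gsum
      apply Finset.sum_eq_single_of_mem S
      · simp [Finset.mem_filter, Finset.mem_powerset, hS]
      · intro T hT hTS
        rcases Finset.mem_filter.mp hT with ⟨hTp, hTne⟩
        exact ih T (lt_of_le_of_ne (Finset.mem_powerset.mp hTp) hTS)
          ((Finset.mem_powerset.mp hTp).trans hSA) hTne
    linarith

/-- Marginalization: the info function of a subsystem `X` of `W` is obtained
by summing the joint info function over fibers `T ∩ X = S`. -/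
private lemma marginal (H : Finset U → ℝ) (W X : Finset U) (hXW : X ⊆ W)
    (IJ IX : Finset U → ℝ) (hIJ : IsInfoFn H W IJ) (hIX : IsInfoFn H X IX) :
    ∀ S ⊆ X, S.Nonempty →
      IX S = ∑ T ∈ W.powerset.filter (fun T => T.Nonempty ∧ T ∩ X = S), IJ T := by
  set J : Finset U → ℝ :=
    fun S => ∑ T ∈ W.powerset.filter (fun T => T.Nonempty ∧ T ∩ X = S), IJ T with hJdef
  have hJ : IsInfoFn H X J := by
    intro B hBX hBne
    have key := hIJ B (hBX.trans hXW) hBne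
    set s := W.powerset.filter (fun T => T.Nonempty ∧ (T ∩ B).Nonempty) with hs
    have hfib := Finset.sum_fiberwise_of_maps_to (s := s) (g := fun T => T ∩ X)
      (t := X.powerset.filter (fun S => S.Nonempty ∧ (S ∩ B).Nonempty)) ?_ IJ
    · rw [key] at hfib
      rw [← hfib]
      apply Finset.sum_congr rfl
      intro S hS
      rcases Finset.mem_filter.mp hS with ⟨hSp, hSne, hSB⟩
      rw [hJdef]
      apply Finset.sum_congr
      · ext T
        simp only [hs, Finset.mem_filter, Finset.mem_powerset]
        constructor
        · rintro ⟨hTW, hTne, hTX⟩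
          refine ⟨⟨hTW, hTne, ?_⟩, hTX⟩
          have : T ∩ B = S ∩ B := by
            rw [← hTX, Finset.inter_assoc, Finset.inter_eq_right.mpr hBX]
          rw [this]; exact hSB
        · rintro ⟨⟨hTW, hTne, _⟩, hTX⟩
          exact ⟨hTW, hTne, hTX⟩
      · intros; rfl
    · intro T hT
      rcases Finset.mem_filter.mp hT with ⟨hTp, hTne, hTB⟩
      have hTW := Finset.mem_powerset.mp hTp
      have hTXB : (T ∩ X) ∩ B = T ∩ B := by
        rw [Finset.inter_assoc, Finset.inter_eq_right.mpr hBX]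
      refine Finset.mem_filter.mpr ⟨Finset.mem_powerset.mpr Finset.inter_subset_right, ?_, ?_⟩
      · rcases hTB with ⟨x, hx⟩
        rw [← hTXB] at hx
        exact ⟨x, (Finset.mem_inter.mp hx).1⟩
      · rw [hTXB]; exact hTB
  intro S hSX hS
  have hvan := vanish X (fun S => IX S - J S) ?_ S hSX hS
  · simpa [hJdef] using sub_eq_zero.mp hvan
  · intro B hB hBne
    rw [Finset.sum_sub_distrib, hIX B hB hBne, hJ B hB hBne, sub_self]

end Aux

/-- the change carries the newly arising complexity, Theorem D.1. Let
`A` and `A'` be disjoint systems with priming bijection `f : A → A'`, and assume the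
information function of the joint system `A ∪ A'` is nonnegative.  If the unaltered system
has no complexity at scale `κ` (`C_A(κ) = 0`), then the noise complexity at scale `κ`
equals the complexity of the altered system at that scale: `C_{A'|A}(κ) = C_{A'}(κ)`. -/
theorem noiseComplexity_eq_of_no_complexity [Fintype U] [DecidableEq U]
    (H : Finset U → ℝ) (A A' : Finset U) (hdisj : Disjoint A A')
    (f : U → U) (hf : Set.BijOn f ↑A ↑A')
    (IJ : Finset U → ℝ) (hIJ : IsInfoFn H (A ∪ A') IJ)
    (hnn : ∀ T : Finset U, T ⊆ A ∪ A' → T.Nonempty → 0 ≤ IJ T)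
    (IA : Finset U → ℝ) (hIA : IsInfoFn H A IA)
    (IA' : Finset U → ℝ) (hIA' : IsInfoFn H A' IA')
    (κ : ℕ) (hzero : complexityAt A IA κ = 0) :
    noiseComplexityAt A A' f IJ κ = complexityAt A' IA' κ := by
  set W := A ∪ A' with hW
  have hAW : A ⊆ W := Finset.subset_union_left
  have hA'W : A' ⊆ W := Finset.subset_union_right
  -- marginalization for A and A'
  have hmargA := marginal H W A hAW IJ IA hIJ hIA
  have hmargA' := marginal H W A' hA'W IJ IA' hIJ hIA'
  -- Step 1: all joint informations at the relevant scale vanish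
  have step1 : ∀ T ⊆ W, T.Nonempty → (T ∩ A).Nonempty → κ ≤ (T ∩ A).card → IJ T = 0 := by
    have hnn' : ∀ S ∈ A.powerset.filter (fun S => S.Nonempty ∧ κ ≤ S.card),
        0 ≤ ∑ T ∈ W.powerset.filter (fun T => T.Nonempty ∧ T ∩ A = S), IJ T := by
      intro S _
      apply Finset.sum_nonneg
      intro T hT
      rcases Finset.mem_filter.mp hT with ⟨hTp, hTne, _⟩
      exact hnn T (Finset.mem_powerset.mp hTp) hTne
    have h0 : ∑ S ∈ A.powerset.filter (fun S => S.Nonempty ∧ κ ≤ S.card),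
        (∑ T ∈ W.powerset.filter (fun T => T.Nonempty ∧ T ∩ A = S), IJ T) = 0 := by
      rw [← hzero]
      unfold complexityAt
      apply Finset.sum_congr rfl
      intro S hS
      rcases Finset.mem_filter.mp hS with ⟨hSp, hSne, _⟩
      exact (hmargA S (Finset.mem_powerset.mp hSp) hSne).symm
    have h1 := (Finset.sum_eq_zero_iff_of_nonneg hnn').mp h0
    intro T hTW hTne hTA hκ
    have hSfa : T ∩ A ∈ A.powerset.filter (fun S => S.Nonempty ∧ κ ≤ S.card) :=
      Finset.mem_filter.mpr ⟨Finset.mem_powerset.mpr Finset.inter_subset_right, hTA, hκ⟩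
    have h2 := h1 (T ∩ A) hSfa
    have hnn'' : ∀ T' ∈ W.powerset.filter (fun T' => T'.Nonempty ∧ T' ∩ A = T ∩ A),
        0 ≤ IJ T' := by
      intro T' hT'
      rcases Finset.mem_filter.mp hT' with ⟨hT'p, hT'ne, _⟩
      exact hnn T' (Finset.mem_powerset.mp hT'p) hT'ne
    exact (Finset.sum_eq_zero_iff_of_nonneg hnn'').mp h2 T
      (Finset.mem_filter.mpr ⟨Finset.mem_powerset.mpr hTW, hTne, rfl⟩)
  -- Step 2: condInfo S = IA' (S.image f) for relevant S
  have step2 : ∀ S ∈ A.powerset.filter (fun S => S.Nonempty ∧ κ ≤ S.card),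
      condInfo A A' f IJ S = IA' (S.image f) := by
    intro S hS
    rcases Finset.mem_filter.mp hS with ⟨hSp, hSne, hSκ⟩
    have hSA := Finset.mem_powerset.mp hSp
    have himsub : S.image f ⊆ A' := by
      intro x hx
      rcases Finset.mem_image.mp hx with ⟨a, ha, rfl⟩
      exact hf.mapsTo (hSA ha)
    have himne : (S.image f).Nonempty := hSne.image f
    have hmeq := hmargA' (S.image f) himsub himne
    have hsplit := Finset.sum_filter_add_sum_filter_not
      (W.powerset.filter (fun T => T.Nonempty ∧ T ∩ A' = S.image f))
      (fun T => T ∩ A = S) IJ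
    rw [Finset.filter_filter, Finset.filter_filter] at hsplit
    have hz : ∑ T ∈ W.powerset.filter
        (fun T => (T.Nonempty ∧ T ∩ A' = S.image f) ∧ T ∩ A = S), IJ T = 0 := by
      apply Finset.sum_eq_zero
      intro T hT
      rcases Finset.mem_filter.mp hT with ⟨hTp, ⟨hTne, _⟩, hTA⟩
      apply step1 T (Finset.mem_powerset.mp hTp) hTne
      · rw [hTA]; exact hSne
      · rw [hTA]; exact hSκ
    have hc : condInfo A A' f IJ S = ∑ T ∈ W.powerset.filter
        (fun T => (T.Nonempty ∧ T ∩ A' = S.image f) ∧ ¬T ∩ A = S), IJ T := by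
      unfold condInfo
      apply Finset.sum_congr _ (fun _ _ => rfl)
      apply Finset.filter_congr
      intro T _
      tauto
    rw [hmeq, ← hsplit, hz, zero_add, hc]
  -- Step 3: reindex the complexity sum of A' by the image bijection
  unfold noiseComplexityAt complexityAt
  rw [Finset.sum_congr rfl step2]
  apply Finset.sum_bij (fun S _ => S.image f)
  · intro S hS
    rcases Finset.mem_filter.mp hS with ⟨hSp, hSne, hSκ⟩
    have hSA := Finset.mem_powerset.mp hSp
    have hinj : Set.InjOn f ↑S := hf.injOn.mono (by exact_mod_cast hSA)
    refine Finset.mem_filter.mpr ⟨Finset.mem_powerset.mpr ?_, hSne.image f, ?_⟩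
    · intro x hx
      rcases Finset.mem_image.mp hx with ⟨a, ha, rfl⟩
      exact hf.mapsTo (hSA ha)
    · rwa [Finset.card_image_of_injOn hinj]
  · intro S₁ h₁ S₂ h₂ heq
    have h₁A := Finset.mem_powerset.mp (Finset.mem_filter.mp h₁).1
    have h₂A := Finset.mem_powerset.mp (Finset.mem_filter.mp h₂).1
    ext a
    constructor
    · intro ha
      have : f a ∈ S₂.image f := heq ▸ Finset.mem_image_of_mem f ha
      rcases Finset.mem_image.mp this with ⟨b, hb, hba⟩
      have := hf.injOn (h₂A hb) (h₁A ha) hba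
      rwa [← this]
    · intro ha
      have : f a ∈ S₁.image f := heq ▸ Finset.mem_image_of_mem f ha
      rcases Finset.mem_image.mp this with ⟨b, hb, hba⟩
      have := hf.injOn (h₁A hb) (h₂A ha) hba
      rwa [← this]
  · intro S' hS'
    rcases Finset.mem_filter.mp hS' with ⟨hS'p, hS'ne, hS'κ⟩
    have hS'A' := Finset.mem_powerset.mp hS'p
    set S := A.filter (fun a => f a ∈ S') with hSdef
    have hSA : S ⊆ A := Finset.filter_subset _ _
    have himg : S.image f = S' := by
      ext x
      constructor
      · intro hx
        rcases Finset.mem_image.mp hx with ⟨a, ha, rfl⟩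
        exact (Finset.mem_filter.mp ha).2
      · intro hx
        rcases hf.surjOn (hS'A' hx) with ⟨a, ha, rfl⟩
        exact Finset.mem_image_of_mem f (Finset.mem_filter.mpr ⟨by exact_mod_cast ha, hx⟩)
    have hinj : Set.InjOn f ↑S := hf.injOn.mono (by exact_mod_cast hSA)
    have hcard : S.card = S'.card := by rw [← himg, Finset.card_image_of_injOn hinj]
    have hSne : S.Nonempty := by
      rcases hS'ne with ⟨x, hx⟩
      rw [← himg] at hx
      rcases Finset.mem_image.mp hx with ⟨a, ha, _⟩
      exact ⟨a, ha⟩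
    refine ⟨S, Finset.mem_filter.mpr ⟨Finset.mem_powerset.mpr hSA, hSne, by omega⟩, himg⟩
  · intro S hS
    rfl
end
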